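/- arXiv:alg-geom/9505009 — 2 statements merged into one kernel-verified Lean document; each statement's English description precedes it below -/
import Mathlib

section
/- Let n ≥ 2 and let W = S_n act on ℂ^n by permuting coordinates. Let V_std = {f : Fin n → ℂ : Σ_i f(i) = 0} be the standard (reflection) representation of S_n. For a subset J ⊆ {1,…,n−1}, let W_J ≤ S_n be the (standard parabolic) subgroup generated by the adjacent transpositions (j, j+1) for j ∈ J. Then a finite-dimensional irreducible complex representation V of S_n satisfies V^{W_J} ≠ 0 for every proper subset J ⊊ {1,…,n−1} if and only if V is isomorphic to the trivial representation or to V_std. (This is the paper's assertion that for the classical groups of type A the reflection representation is the only nontrivial irreducible W-representation occurring in ℤ[W_P\W] for all proper Weyl subgroups W_P, i.e. the distinguished Prym is the only common component.) -/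
/-!
Take `J = {1, …, n-2}` (zero-based), so that `W_J` is the stabilizer of `0`. By Frobenius
reciprocity a nonzero `W_J`-fixed vector `v` gives an intertwiner `Φ : ℂⁿ → V` with `Φ e₀ = v`.
Any `S_n`-stable subspace of `ℂⁿ` meeting `V_std` nontrivially contains `V_std`. So either
`ker Φ` misses `V_std`, and then by irreducibility `Φ` maps `V_std` isomorphically onto `V`; or
`V_std ⊆ ker Φ`, and then `S_n` fixes `v = Φ e₀` and `V` is trivial. Conversely, if `k ∉ J`, the
indicator of `{0, …, k}` minus its mean is a nonzero vector of `V_std` fixed by every generator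
of `W_J`.
-/

open Module

def invariantsUnder {W : Type*} [Group W] {Vs : Type*} [AddCommGroup Vs] [Module ℂ Vs]
    (ρ : Representation ℂ W Vs) (H : Subgroup W) : Submodule ℂ Vs where
  carrier := {v | ∀ h ∈ H, ρ h v = v}
  add_mem' := by
    intro a b ha hb h hh
    simp only [map_add, ha h hh, hb h hh]
  zero_mem' := by
    intro h hh
    simp
  smul_mem' := by
    intro c a ha h hh
    simp only [map_smul, ha h hh]

def IsIrreducibleRep {W : Type*} [Group W] {Vs : Type*} [AddCommGroup Vs] [Module ℂ Vs]
    (ρ : Representation ℂ W Vs) : Prop :=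
  (∃ v : Vs, v ≠ 0) ∧
  ∀ U : Submodule ℂ Vs, (∀ g : W, ∀ v ∈ U, ρ g v ∈ U) → U = ⊥ ∨ U = ⊤

/-- The permutation representation of `S_n` on `ℂⁿ`: `(σ • f)(i) = f(σ⁻¹ i)`. -/
noncomputable def permActionRep (n : ℕ) :
    Representation ℂ (Equiv.Perm (Fin n)) (Fin n → ℂ) where
  toFun σ := LinearMap.funLeft ℂ ℂ ⇑σ⁻¹
  map_one' := by
    ext f i
    simp [LinearMap.funLeft]
  map_mul' := by
    intro σ τ
    ext f i
    simp [LinearMap.funLeft, mul_inv_rev]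

noncomputable def stdSpace (n : ℕ) : Submodule ℂ (Fin n → ℂ) where
  carrier := {f | ∑ i, f i = 0}
  add_mem' := by
    intro a b ha hb
    simp only [Set.mem_setOf_eq] at ha hb ⊢
    simp [Finset.sum_add_distrib, ha, hb]
  zero_mem' := by simp
  smul_mem' := by
    intro c a ha
    simp only [Set.mem_setOf_eq] at ha ⊢
    simp [← Finset.mul_sum, ha]

lemma stdSpace_invariant (n : ℕ) (σ : Equiv.Perm (Fin n)) :
    ∀ f ∈ stdSpace n, permActionRep n σ f ∈ stdSpace n := by
  intro f hf
  show ∑ i, (permActionRep n σ f) i = 0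
  have h : ∀ i, (permActionRep n σ f) i = f (σ⁻¹ i) := fun _ => rfl
  simp only [h]
  rw [Equiv.sum_comp σ⁻¹ f]
  exact hf

noncomputable def stdRep (n : ℕ) :
    Representation ℂ (Equiv.Perm (Fin n)) (stdSpace n) where
  toFun σ := (permActionRep n σ).restrict (stdSpace_invariant n σ)
  map_one' := by
    refine LinearMap.ext fun v => Subtype.ext ?_
    simp [LinearMap.restrict_apply, map_one]
  map_mul' := by
    intro σ τ
    refine LinearMap.ext fun v => Subtype.ext ?_
    simp [LinearMap.restrict_apply, map_mul]

/-- The standard parabolic subgroup `W_J` of `S_n` generated by the adjacent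
transpositions `(j, j+1)` for `j ∈ J` (indices `0 ≤ j < n-1`, zero-based). -/
def adjacentParabolic (n : ℕ) (J : Set ℕ) : Subgroup (Equiv.Perm (Fin n)) :=
  Subgroup.closure {g | ∃ j ∈ J, ∃ (h1 : j < n) (h2 : j + 1 < n),
    g = Equiv.swap (⟨j, h1⟩ : Fin n) ⟨j + 1, h2⟩}

section Invariants

variable {W : Type*} [Group W] {Vs : Type*} [AddCommGroup Vs] [Module ℂ Vs]
  {M : Type*} [AddCommGroup M] [Module ℂ M]

lemma mem_invariantsUnder_closure (ρ : Representation ℂ W Vs) {S : Set W} {v : Vs}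
    (hS : ∀ s ∈ S, ρ s v = v) : v ∈ invariantsUnder ρ (Subgroup.closure S) := by
  intro h hh
  induction hh using Subgroup.closure_induction with
  | mem s hs => exact hS s hs
  | one => simp
  | mul a b _ _ ha hb => rw [map_mul, Module.End.mul_apply, hb, ha]
  | inv a _ ha => rw [← ha, ← Module.End.mul_apply, ← map_mul, inv_mul_cancel, ha, map_one,
      Module.End.one_apply]

lemma invariantsUnder_ne_bot_of_linearEquiv {ρ : Representation ℂ W Vs}
    {σ : Representation ℂ W M} (e : Vs ≃ₗ[ℂ] M) (he : ∀ g v, e (ρ g v) = σ g (e v))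
    {H : Subgroup W} (hH : invariantsUnder σ H ≠ ⊥) : invariantsUnder ρ H ≠ ⊥ := by
  obtain ⟨x, hx, hx0⟩ := Submodule.exists_mem_ne_zero_of_ne_bot hH
  refine (Submodule.ne_bot_iff _).mpr ⟨e.symm x, fun h hh => e.injective ?_, by simpa using hx0⟩
  rw [he, e.apply_symm_apply, hx h hh]

lemma exists_linearEquiv_of_bijective {ρ : Representation ℂ W Vs}
    {σ : Representation ℂ W M} (Ψ : M →ₗ[ℂ] Vs) (hΨ : Function.Bijective Ψ)
    (hΨρ : ∀ g x, Ψ (σ g x) = ρ g (Ψ x)) : ∃ e : Vs ≃ₗ[ℂ] M, ∀ g v, e (ρ g v) = σ g (e v) := by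
  let e := LinearEquiv.ofBijective Ψ hΨ
  refine ⟨e.symm, fun g v => ?_⟩
  obtain ⟨x, rfl⟩ := e.surjective v
  rw [e.symm_apply_apply, LinearEquiv.symm_apply_eq]
  exact (hΨρ g x).symm

lemma IsIrreducibleRep.exists_linearEquiv_trivial {ρ : Representation ℂ W Vs}
    (hirr : IsIrreducibleRep ρ) {v : Vs} (hv0 : v ≠ 0) (hv : ∀ g, ρ g v = v) :
    ∃ e : Vs ≃ₗ[ℂ] ℂ, ∀ g u, e (ρ g u) = e u := by
  have hspan : ℂ ∙ v = ⊤ := by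
    refine (hirr.2 _ fun g u hu => ?_).resolve_left (by simpa using hv0)
    obtain ⟨c, rfl⟩ := Submodule.mem_span_singleton.mp hu
    rw [map_smul, hv]
    exact hu
  obtain ⟨e, he⟩ := exists_linearEquiv_of_bijective (ρ := ρ) (σ := Representation.trivial ℂ W ℂ)
    (LinearMap.toSpanSingleton ℂ Vs v)
    ⟨LinearMap.ker_eq_bot.mp (LinearMap.ker_toSpanSingleton ℂ hv0),
      LinearMap.range_eq_top.mp (by rwa [LinearMap.range_toSpanSingleton])⟩
    (fun g c => by simp [hv])
  exact ⟨e, fun g u => he g u⟩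

end Invariants

section PermutationRepresentation

variable {n : ℕ}

lemma permActionRep_apply (σ : Equiv.Perm (Fin n)) (f : Fin n → ℂ) (i : Fin n) :
    permActionRep n σ f i = f (σ⁻¹ i) := rfl

lemma permActionRep_single (σ : Equiv.Perm (Fin n)) (a : Fin n) :
    permActionRep n σ (Pi.single a 1) = Pi.single (σ a) 1 := by
  ext i
  simp [permActionRep_apply, Pi.single_apply, Equiv.eq_symm_apply, eq_comm]

lemma permActionRep_const (σ : Equiv.Perm (Fin n)) (c : ℂ) :
    permActionRep n σ (fun _ => c) = fun _ => c := rfl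

lemma mem_stdSpace {f : Fin n → ℂ} : f ∈ stdSpace n ↔ ∑ i, f i = 0 := Iff.rfl

lemma permActionRep_sub_self_mem_stdSpace (σ : Equiv.Perm (Fin n)) (f : Fin n → ℂ) :
    permActionRep n σ f - f ∈ stdSpace n := by
  simp only [mem_stdSpace, Pi.sub_apply, permActionRep_apply, Finset.sum_sub_distrib,
    Equiv.sum_comp, sub_self]

lemma sub_mean_mem_stdSpace (hn : n ≠ 0) (f : Fin n → ℂ) :
    f - ((∑ i, f i) / n) • (fun _ => 1) ∈ stdSpace n := by
  have : (n : ℂ) ≠ 0 := Nat.cast_ne_zero.mpr hn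
  simp only [mem_stdSpace, Pi.sub_apply, Pi.smul_apply, smul_eq_mul, mul_one,
    Finset.sum_sub_distrib, Finset.sum_const, Finset.card_univ, Fintype.card_fin, nsmul_eq_mul]
  field_simp
  ring

lemma stdSpace_ne_bot (hn : 2 ≤ n) : stdSpace n ≠ ⊥ := by
  refine (Submodule.ne_bot_iff _).mpr
    ⟨Pi.single ⟨0, by omega⟩ 1 - Pi.single ⟨1, by omega⟩ 1, by simp [mem_stdSpace], ?_⟩
  intro h
  simpa [Pi.single_apply, Fin.ext_iff] using congrFun h ⟨0, by omega⟩

lemma exists_apply_ne_of_mem_stdSpace {f : Fin n → ℂ} (hf : f ∈ stdSpace n) (hf0 : f ≠ 0) :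
    ∃ a b, f a ≠ f b := by
  by_contra! hconst
  obtain ⟨i, hi⟩ := Function.ne_iff.mp hf0
  have hsum : (n : ℂ) * f i = 0 := by
    simpa [hconst _ i] using mem_stdSpace.mp hf
  exact hi (by simpa [(Fin.pos i).ne'] using hsum)

lemma sub_permActionRep_swap (f : Fin n → ℂ) {a b : Fin n} (hab : a ≠ b) :
    f - permActionRep n (Equiv.swap a b) f = (f a - f b) • (Pi.single a 1 - Pi.single b 1) := by
  ext i
  rcases eq_or_ne i a with rfl | hia
  · simp [permActionRep_apply, hab]
  rcases eq_or_ne i b with rfl | hib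
  · simp [permActionRep_apply, hia]
  · simp [permActionRep_apply, Equiv.swap_apply_of_ne_of_ne hia hib, hia, hib]

lemma stdSpace_le_of_mem {U : Submodule ℂ (Fin n → ℂ)}
    (hU : ∀ g : Equiv.Perm (Fin n), ∀ f ∈ U, permActionRep n g f ∈ U) {f : Fin n → ℂ}
    (hfU : f ∈ U) (hf : f ∈ stdSpace n) (hf0 : f ≠ 0) : stdSpace n ≤ U := by
  obtain ⟨a, b, hfab⟩ := exists_apply_ne_of_mem_stdSpace hf hf0
  have hab : a ≠ b := ne_of_apply_ne f hfab
  have hab_mem : Pi.single a 1 - Pi.single b 1 ∈ U := by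
    have := U.smul_mem (f a - f b)⁻¹ (U.sub_mem hfU (hU (Equiv.swap a b) f hfU))
    rwa [sub_permActionRep_swap f hab, smul_smul, inv_mul_cancel₀ (sub_ne_zero.mpr hfab),
      one_smul] at this
  have hbase : ∀ i, Pi.single i 1 - Pi.single b 1 ∈ U := by
    intro i
    rcases eq_or_ne i b with rfl | hib
    · simp
    have := hU (Equiv.swap a i) _ hab_mem
    rwa [map_sub, permActionRep_single, permActionRep_single, Equiv.swap_apply_left,
      Equiv.swap_apply_of_ne_of_ne hab.symm hib.symm] at this
  intro g hg
  have hg' : g = ∑ i, g i • (Pi.single i 1 - Pi.single b 1) := by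
    simp only [smul_sub, Finset.sum_sub_distrib, ← Finset.sum_smul, mem_stdSpace.mp hg,
      zero_smul, sub_zero]
    exact pi_eq_sum_univ' g
  rw [hg']
  exact U.sum_mem fun i _ => U.smul_mem _ (hbase i)

end PermutationRepresentation

section Parabolic

variable {n : ℕ}

lemma mem_adjacentParabolic_iff {J : Set ℕ} {σ : Equiv.Perm (Fin n)} :
    σ ∈ adjacentParabolic n J ↔ ∀ x, σ x ∈ MulAction.orbit (adjacentParabolic n J) x := by
  refine (mem_closure_isSwap ?_).trans (and_iff_right (Set.toFinite _))
  rintro _ ⟨j, -, h1, h2, rfl⟩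
  exact ⟨_, _, by simp [Fin.ext_iff], rfl⟩

lemma mem_orbit_adjacentParabolic {J : Set ℕ} {a b : ℕ} (hab : a ≤ b) (hb : b < n)
    (hJ : ∀ j, a ≤ j → j < b → j ∈ J) :
    (⟨b, hb⟩ : Fin n) ∈ MulAction.orbit (adjacentParabolic n J) ⟨a, by omega⟩ := by
  induction b, hab using Nat.le_induction with
  | base => exact MulAction.mem_orbit_self _
  | succ b hab ih =>
    have hprev := ih (by omega) fun j hj hjb => hJ j hj (by omega)
    have hswap : Equiv.swap (⟨b, by omega⟩ : Fin n) ⟨b + 1, hb⟩ ∈ adjacentParabolic n J :=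
      Subgroup.subset_closure ⟨b, hJ b hab (by omega), by omega, hb, rfl⟩
    rw [← MulAction.orbit_eq_iff.mpr hprev]
    exact ⟨⟨_, hswap⟩, Equiv.swap_apply_left _ _⟩

lemma mem_adjacentParabolic_of_apply_zero (hn : 0 < n) {σ : Equiv.Perm (Fin n)}
    (hσ : σ ⟨0, hn⟩ = ⟨0, hn⟩) :
    σ ∈ adjacentParabolic n ↑((Finset.range (n - 1)).erase 0) := by
  refine mem_adjacentParabolic_iff.mpr fun x => ?_
  rcases eq_or_ne x ⟨0, hn⟩ with rfl | hx
  · rw [hσ]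
    exact MulAction.mem_orbit_self _
  have h1 : 1 < n := by
    have := Fin.ext_iff.not.mp hx
    omega
  have horbit : ∀ y : Fin n, y ≠ ⟨0, hn⟩ → y ∈ MulAction.orbit
      (adjacentParabolic n ↑((Finset.range (n - 1)).erase 0)) ⟨1, h1⟩ := by
    intro y hy
    have hy : (y : ℕ) ≠ 0 := fun h => hy (Fin.ext h)
    exact mem_orbit_adjacentParabolic (b := y) (by omega) y.isLt
      fun j hj hjy => by simp; omega
  rw [MulAction.orbit_eq_iff.mpr (horbit x hx)]
  exact horbit _ (hσ ▸ σ.injective.ne hx)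

end Parabolic

section Classification

variable {n : ℕ} {Vs : Type*} [AddCommGroup Vs] [Module ℂ Vs]
  {ρ : Representation ℂ (Equiv.Perm (Fin n)) Vs}

/-- The intertwiner `ℂⁿ → V` of Frobenius reciprocity, for `v` fixed by the stabilizer of `z`:
`eᵢ ↦ ρ σ v` for any `σ` with `σ z = i` (well defined by the invariance of `v`). -/
noncomputable def frobeniusMap (ρ : Representation ℂ (Equiv.Perm (Fin n)) Vs) (z : Fin n)
    (v : Vs) : (Fin n → ℂ) →ₗ[ℂ] Vs :=
  Fintype.linearCombination ℂ fun i => ρ (Equiv.swap z i) v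

lemma frobeniusMap_single_self (z : Fin n) (v : Vs) :
    frobeniusMap ρ z v (Pi.single z 1) = v := by
  simp [frobeniusMap, Fintype.linearCombination_apply, Pi.single_apply, ← Equiv.Perm.one_def]

lemma frobeniusMap_permActionRep {z : Fin n} {v : Vs} (hv : ∀ σ, σ z = z → ρ σ v = v)
    (g : Equiv.Perm (Fin n)) (f : Fin n → ℂ) :
    frobeniusMap ρ z v (permActionRep n g f) = ρ g (frobeniusMap ρ z v f) := by
  have hswap : ∀ x, ρ (Equiv.swap z (g x)) v = ρ g (ρ (Equiv.swap z x) v) := by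
    intro x
    have hfix : ((Equiv.swap z (g x))⁻¹ * (g * Equiv.swap z x)) z = z := by simp
    conv_lhs => rw [← hv _ hfix]
    rw [← Module.End.mul_apply, ← map_mul, mul_inv_cancel_left, map_mul, Module.End.mul_apply]
  simp only [frobeniusMap, Fintype.linearCombination_apply, permActionRep_apply, map_sum,
    map_smul]
  rw [← Equiv.sum_comp g]
  simp [hswap]

variable {Φ : (Fin n → ℂ) →ₗ[ℂ] Vs} (hΦ : ∀ g f, Φ (permActionRep n g f) = ρ g (Φ f))
include hΦ

lemma exists_linearEquiv_stdRep_of_disjoint (hn : 2 ≤ n) (hirr : IsIrreducibleRep ρ)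
    (hdisj : Disjoint (LinearMap.ker Φ) (stdSpace n)) :
    ∃ e : Vs ≃ₗ[ℂ] stdSpace n, ∀ g v, e (ρ g v) = stdRep n g (e v) := by
  let Ψ := Φ ∘ₗ (stdSpace n).subtype
  have hΨ : ∀ g x, Ψ (stdRep n g x) = ρ g (Ψ x) := fun g x => hΦ g x
  have hinj : Function.Injective Ψ := by
    refine (injective_iff_map_eq_zero Ψ).mpr fun x hx => Subtype.ext ?_
    exact Submodule.disjoint_def.mp hdisj x hx x.2
  have : Nontrivial (stdSpace n) := Submodule.nontrivial_iff_ne_bot.mpr (stdSpace_ne_bot hn)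
  have hrange : LinearMap.range Ψ = ⊤ := by
    refine (hirr.2 _ ?_).resolve_left
      (LinearMap.range_eq_bot.not.mpr (LinearMap.ne_zero_of_injective hinj))
    rintro g _ ⟨x, rfl⟩
    exact ⟨stdRep n g x, hΨ g x⟩
  exact exists_linearEquiv_of_bijective Ψ ⟨hinj, LinearMap.range_eq_top.mp hrange⟩ hΨ

lemma apply_eq_of_stdSpace_le_ker (hker : stdSpace n ≤ LinearMap.ker Φ)
    (g : Equiv.Perm (Fin n)) (f : Fin n → ℂ) : ρ g (Φ f) = Φ f := by
  rw [← hΦ, ← sub_eq_zero, ← map_sub]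
  exact hker (permActionRep_sub_self_mem_stdSpace g f)

end Classification

lemma IsIrreducibleRep.exists_linearEquiv_trivial_or_stdRep {n : ℕ} (hn : 2 ≤ n)
    {Vs : Type*} [AddCommGroup Vs] [Module ℂ Vs]
    {ρ : Representation ℂ (Equiv.Perm (Fin n)) Vs} (hirr : IsIrreducibleRep ρ) {z : Fin n}
    {v : Vs} (hv0 : v ≠ 0) (hv : ∀ σ, σ z = z → ρ σ v = v) :
    (∃ e : Vs ≃ₗ[ℂ] ℂ, ∀ g u, e (ρ g u) = e u) ∨
      ∃ e : Vs ≃ₗ[ℂ] stdSpace n, ∀ g u, e (ρ g u) = stdRep n g (e u) := by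
  have hΦ := frobeniusMap_permActionRep hv
  by_cases hdisj : Disjoint (LinearMap.ker (frobeniusMap ρ z v)) (stdSpace n)
  · exact Or.inr (exists_linearEquiv_stdRep_of_disjoint hΦ hn hirr hdisj)
  obtain ⟨f, hfK, hfs, hf0⟩ :
      ∃ f ∈ LinearMap.ker (frobeniusMap ρ z v), f ∈ stdSpace n ∧ f ≠ 0 := by
    simpa [Submodule.disjoint_def] using hdisj
  have hker : stdSpace n ≤ LinearMap.ker (frobeniusMap ρ z v) :=
    stdSpace_le_of_mem (fun g f hf => by rw [LinearMap.mem_ker, hΦ, hf, map_zero]) hfK hfs hf0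
  refine Or.inl (hirr.exists_linearEquiv_trivial hv0 fun g => ?_)
  simpa [frobeniusMap_single_self] using apply_eq_of_stdSpace_le_ker hΦ hker g (Pi.single z 1)

lemma invariantsUnder_stdRep_adjacentParabolic_ne_bot {n : ℕ} {J : Finset ℕ}
    (hJ : J ⊂ Finset.range (n - 1)) :
    invariantsUnder (stdRep n) (adjacentParabolic n ↑J) ≠ ⊥ := by
  obtain ⟨k, hk, hkJ⟩ := Finset.exists_of_ssubset hJ
  rw [Finset.mem_range] at hk
  set f : Fin n → ℂ := fun i => if (i : ℕ) ≤ k then 1 else 0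
  set w := f - ((∑ i, f i) / n) • (fun _ => 1 : Fin n → ℂ)
  have hfix : ∀ j ∈ J, ∀ (h1 : j < n) (h2 : j + 1 < n),
      permActionRep n (Equiv.swap ⟨j, h1⟩ ⟨j + 1, h2⟩) f = f := by
    intro j hj h1 h2
    have hjk : j ≠ k := fun h => hkJ (h ▸ hj)
    ext i
    simp only [permActionRep_apply, Equiv.swap_inv, f, Equiv.swap_apply_def]
    split_ifs <;> simp_all [Fin.ext_iff] <;> omega
  refine (Submodule.ne_bot_iff _).mpr
    ⟨⟨w, sub_mean_mem_stdSpace (by omega) f⟩, mem_invariantsUnder_closure _ ?_, ?_⟩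
  · rintro _ ⟨j, hj, h1, h2, rfl⟩
    refine Subtype.ext ?_
    change permActionRep n _ w = w
    rw [map_sub, map_smul, permActionRep_const, hfix j hj]
  · intro h
    have := congrArg (fun u : stdSpace n => u.1 ⟨0, by omega⟩ - u.1 ⟨n - 1, by omega⟩) h
    simp [w, f, show ¬n ≤ k + 1 by omega] at this

theorem statement4_general (n : ℕ) (hn : 2 ≤ n)
    (Vs : Type*) [AddCommGroup Vs] [Module ℂ Vs]
    (ρ : Representation ℂ (Equiv.Perm (Fin n)) Vs) (hirr : IsIrreducibleRep ρ) :
    (∀ J : Finset ℕ, J ⊂ Finset.range (n - 1) →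
        invariantsUnder ρ (adjacentParabolic n ↑J) ≠ ⊥)
      ↔ ((∃ e : Vs ≃ₗ[ℂ] ℂ, ∀ g v, e (ρ g v) = e v) ∨
         (∃ e : Vs ≃ₗ[ℂ] stdSpace n, ∀ g v, e (ρ g v) = stdRep n g (e v))) := by
  constructor
  · intro hinv
    have hJ : (Finset.range (n - 1)).erase 0 ⊂ Finset.range (n - 1) :=
      Finset.erase_ssubset (by simp; omega)
    obtain ⟨v, hv, hv0⟩ := Submodule.exists_mem_ne_zero_of_ne_bot (hinv _ hJ)
    exact hirr.exists_linearEquiv_trivial_or_stdRep hn (z := ⟨0, by omega⟩) hv0 fun σ hσ =>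
      hv σ (mem_adjacentParabolic_of_apply_zero (by omega) hσ)
  · rintro (⟨e, he⟩ | ⟨e, he⟩) J hJ
    · obtain ⟨v, hv0⟩ := hirr.1
      exact (Submodule.ne_bot_iff _).mpr ⟨v, fun g _ => e.injective (he g v), hv0⟩
    · exact invariantsUnder_ne_bot_of_linearEquiv e he
        (invariantsUnder_stdRep_adjacentParabolic_ne_bot hJ)

/-- An irreducible representation of `S_n` has nonzero invariants
under every proper standard parabolic subgroup iff it is trivial or standard. -/
theorem statement4 (n : ℕ) (hn : 2 ≤ n)
    (Vs : Type*) [AddCommGroup Vs] [Module ℂ Vs] [FiniteDimensional ℂ Vs]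
    (ρ : Representation ℂ (Equiv.Perm (Fin n)) Vs) (hirr : IsIrreducibleRep ρ) :
    (∀ J : Finset ℕ, J ⊂ Finset.range (n - 1) →
        invariantsUnder ρ (adjacentParabolic n ↑J) ≠ ⊥)
      ↔ ((∃ e : Vs ≃ₗ[ℂ] ℂ, ∀ g v, e (ρ g v) = e v) ∨
         (∃ e : Vs ≃ₗ[ℂ] stdSpace n, ∀ g v, e (ρ g v) = stdRep n g (e v))) :=
  statement4_general n hn Vs ρ hirr
end

section
/- Let n ≥ 2, let T ⊂ SL(n, ℂ) be the subgroup of diagonal matrices of determinant 1, and let N be the normalizer of T in SL(n, ℂ). Then every element of N is a monomial matrix, the map π : N → S_n sending a monomial matrix to its underlying permutation is a surjective group homomorphism with kernel T (so N/T ≅ W = S_n), and there exists a group homomorphism s : S_n → N with π ∘ s = id if and only if n is odd. (This expresses the paper's assertion that the extension class [N] ∈ H²(W, T) vanishes for SL(2n+1) but is nonzero for SL(2n).) -/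
/-!
An element `g` of the normalizer conjugates a regular element `diag d` of `T` (distinct entries
with product `1`, available since `ℂ` is algebraically closed) to some `diag e`, so
`g * diag d = diag e * g`: an entry `g i j` can be nonzero only when `d j = e i`, so each row
has at most one nonzero entry, and since `det g ≠ 0` the matrix `g` is monomial. Conversely,
monomial matrices of determinant `1` normalize `T`, and the permutation of a product of
monomial matrices is the product of their permutations; this gives `π`, whose kernel is `T`
and which is onto because a permutation matrix can be rescaled by an `n`-th root of its sign.

For `n` odd, sending `σ` to `sign σ` times its permutation matrix is a splitting, as the
determinant of that matrix is `sign σ ^ (n + 1) = 1`.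
For `n` even, any lift `g` of the `n`-cycle `c` satisfies `g ^ n = (∏ j, g (c j) j) • 1` and
`det g = sign c * ∏ j, g (c j) j = -∏ j, g (c j) j`; a splitting would force `g ^ n = 1` and
hence `det g = -1`.
-/

open Matrix

/-- The subgroup `T` of diagonal matrices in `SL(n, ℂ)`. -/
def diagSubgroupSL (n : ℕ) : Subgroup (Matrix.SpecialLinearGroup (Fin n) ℂ) where
  carrier := {g | ∀ i j : Fin n, i ≠ j → (g : Matrix (Fin n) (Fin n) ℂ) i j = 0}
  one_mem' := by
    intro i j hij
    show (((1 : Matrix.SpecialLinearGroup (Fin n) ℂ)) : Matrix (Fin n) (Fin n) ℂ) i j = 0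
    rw [Matrix.SpecialLinearGroup.coe_one, Matrix.one_apply_ne hij]
  mul_mem' := by
    intro a b ha hb i j hij
    show ((a * b : Matrix.SpecialLinearGroup (Fin n) ℂ) : Matrix (Fin n) (Fin n) ℂ) i j = 0
    rw [Matrix.SpecialLinearGroup.coe_mul, Matrix.mul_apply]
    apply Finset.sum_eq_zero
    intro k _
    by_cases hk : k = j
    · subst hk
      rw [ha i k hij, zero_mul]
    · rw [hb k j hk, mul_zero]
  inv_mem' := by
    intro g hg i j hij
    have hAB : (g : Matrix (Fin n) (Fin n) ℂ) *
        ((g⁻¹ : Matrix.SpecialLinearGroup (Fin n) ℂ) : Matrix (Fin n) (Fin n) ℂ) = 1 := by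
      rw [← Matrix.SpecialLinearGroup.coe_mul, mul_inv_cancel, Matrix.SpecialLinearGroup.coe_one]
    have hBA : ((g⁻¹ : Matrix.SpecialLinearGroup (Fin n) ℂ) : Matrix (Fin n) (Fin n) ℂ) *
        (g : Matrix (Fin n) (Fin n) ℂ) = 1 := by
      rw [← Matrix.SpecialLinearGroup.coe_mul, inv_mul_cancel, Matrix.SpecialLinearGroup.coe_one]
    have hAjj : (g : Matrix (Fin n) (Fin n) ℂ) j j ≠ 0 := by
      intro h0
      have h1 : ((g : Matrix (Fin n) (Fin n) ℂ) *
          ((g⁻¹ : Matrix.SpecialLinearGroup (Fin n) ℂ) : Matrix (Fin n) (Fin n) ℂ)) j j = 1 := by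
        rw [hAB, Matrix.one_apply_eq]
      rw [Matrix.mul_apply] at h1
      have h2 : ∑ k, (g : Matrix (Fin n) (Fin n) ℂ) j k *
          ((g⁻¹ : Matrix.SpecialLinearGroup (Fin n) ℂ) : Matrix (Fin n) (Fin n) ℂ) k j = 0 := by
        apply Finset.sum_eq_zero
        intro k _
        by_cases hk : k = j
        · subst hk
          rw [h0, zero_mul]
        · rw [hg j k (fun hjk => hk hjk.symm), zero_mul]
      rw [h2] at h1
      exact one_ne_zero h1.symm
    have h3 : (((g⁻¹ : Matrix.SpecialLinearGroup (Fin n) ℂ) : Matrix (Fin n) (Fin n) ℂ) *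
        (g : Matrix (Fin n) (Fin n) ℂ)) i j = 0 := by
      rw [hBA, Matrix.one_apply_ne hij]
    rw [Matrix.mul_apply] at h3
    have h4 : ∑ k, ((g⁻¹ : Matrix.SpecialLinearGroup (Fin n) ℂ) : Matrix (Fin n) (Fin n) ℂ) i k *
        (g : Matrix (Fin n) (Fin n) ℂ) k j
        = ((g⁻¹ : Matrix.SpecialLinearGroup (Fin n) ℂ) : Matrix (Fin n) (Fin n) ℂ) i j *
          (g : Matrix (Fin n) (Fin n) ℂ) j j := by
      apply Finset.sum_eq_single
      · intro k _ hk
        rw [hg k j hk, mul_zero]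
      · intro hj
        exact absurd (Finset.mem_univ j) hj
    rw [h4] at h3
    exact (mul_eq_zero.mp h3).resolve_right hAjj

/-- A monomial matrix in `SL(n, ℂ)`: exactly one nonzero entry in each row and each
column. -/
def IsMonomialSL (n : ℕ) (g : Matrix.SpecialLinearGroup (Fin n) ℂ) : Prop :=
  (∀ i : Fin n, ∃! j : Fin n, (g : Matrix (Fin n) (Fin n) ℂ) i j ≠ 0) ∧
  (∀ j : Fin n, ∃! i : Fin n, (g : Matrix (Fin n) (Fin n) ℂ) i j ≠ 0)

open Equiv Finset

theorem finRotate_pow_val_apply_zero {m : ℕ} (k : Fin (m + 1)) :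
    (finRotate (m + 1) ^ (k : ℕ)) 0 = k := by
  rw [Perm.coe_pow, ← finCycle_eq_finRotate_iterate, finCycle_apply, zero_add]

theorem finRotate_pow_self (m : ℕ) : finRotate (m + 1) ^ (m + 1) = 1 := by
  have hiter := finCycle_eq_finRotate_iterate (k := Fin.last m)
  rw [Fin.val_last] at hiter
  ext i
  rw [pow_succ', Perm.mul_apply, Perm.coe_pow, ← hiter, finCycle_apply, finRotate_apply,
    add_assoc, Fin.last_add_one, add_zero, Perm.one_apply]

theorem Int.cast_units_mul_self {R : Type*} [Ring R] (u : ℤˣ) :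
    ((u : ℤ) : R) * (u : ℤ) = 1 := by
  rw [← Int.cast_mul, ← Units.val_mul, Int.units_mul_self, Units.val_one, Int.cast_one]

theorem Int.cast_units_mul_pow_of_odd {R : Type*} [Ring R] (u : ℤˣ) {n : ℕ} (hn : Odd n) :
    ((u : ℤ) : R) * (u : ℤ) ^ n = 1 := by
  obtain ⟨k, rfl⟩ := hn
  rw [← pow_succ', show 2 * k + 1 + 1 = 2 * (k + 1) by ring, pow_mul, sq,
    Int.cast_units_mul_self, one_pow]

namespace Matrix

variable {ι R : Type*}

section Pattern

variable [Zero R]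

def IsMonomialWithPerm (A : Matrix ι ι R) (σ : Perm ι) : Prop :=
  ∀ i j, A i j ≠ 0 ↔ i = σ j

variable {A : Matrix ι ι R} {σ τ : Perm ι}

theorem IsMonomialWithPerm.apply_eq_zero (hA : A.IsMonomialWithPerm σ) {i j : ι}
    (h : i ≠ σ j) : A i j = 0 :=
  not_not.mp (mt (hA i j).mp h)

theorem IsMonomialWithPerm.apply_ne_zero (hA : A.IsMonomialWithPerm σ) (j : ι) :
    A (σ j) j ≠ 0 :=
  (hA _ j).mpr rfl

theorem IsMonomialWithPerm.perm_eq (hσ : A.IsMonomialWithPerm σ) (hτ : A.IsMonomialWithPerm τ) :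
    σ = τ :=
  Equiv.ext fun j => (hτ _ j).mp (hσ.apply_ne_zero j)

theorem IsMonomialWithPerm.existsUnique_row (hA : A.IsMonomialWithPerm σ) (i : ι) :
    ∃! j, A i j ≠ 0 :=
  ⟨σ⁻¹ i, (hA _ _).mpr (by simp), fun j hj => by simp [(hA i j).mp hj]⟩

theorem IsMonomialWithPerm.existsUnique_col (hA : A.IsMonomialWithPerm σ) (j : ι) :
    ∃! i, A i j ≠ 0 :=
  ⟨σ j, hA.apply_ne_zero j, fun i hi => (hA i j).mp hi⟩

theorem IsMonomialWithPerm.isDiag_iff (hA : A.IsMonomialWithPerm σ) : A.IsDiag ↔ σ = 1 := by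
  refine ⟨fun hd => Equiv.ext fun j => by_contra fun h => hA.apply_ne_zero j (hd h), ?_⟩
  rintro rfl i j hij
  exact hA.apply_eq_zero hij

end Pattern

section Monomial

variable [CommRing R] [DecidableEq ι]

def monomialMatrix (σ : Perm ι) (d : ι → R) : Matrix ι ι R :=
  of fun i j => if i = σ j then d j else 0

theorem monomialMatrix_apply (σ : Perm ι) (d : ι → R) (i j : ι) :
    monomialMatrix σ d i j = if i = σ j then d j else 0 :=
  rfl

theorem isMonomialWithPerm_monomialMatrix {σ : Perm ι} {d : ι → R} (hd : ∀ j, d j ≠ 0) :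
    (monomialMatrix σ d).IsMonomialWithPerm σ := by
  intro i j
  by_cases h : i = σ j <;> simp [monomialMatrix_apply, h, hd]

theorem IsMonomialWithPerm.eq_monomialMatrix {A : Matrix ι ι R} {σ : Perm ι}
    (hA : A.IsMonomialWithPerm σ) : A = monomialMatrix σ fun j => A (σ j) j := by
  ext i j
  by_cases h : i = σ j
  · simp [monomialMatrix_apply, h]
  · simp [monomialMatrix_apply, h, hA.apply_eq_zero h]

theorem monomialMatrix_one : monomialMatrix (1 : Perm ι) (fun _ => (1 : R)) = 1 := by
  ext i j
  rw [monomialMatrix_apply, one_apply]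
  rfl

variable [Fintype ι]

theorem mul_monomialMatrix_apply (A : Matrix ι ι R) (τ : Perm ι) (e : ι → R) (i j : ι) :
    (A * monomialMatrix τ e) i j = A i (τ j) * e j := by
  rw [mul_apply, Finset.sum_eq_single (τ j)]
  · simp [monomialMatrix_apply]
  · intro k _ hk
    simp [monomialMatrix_apply, hk]
  · simp

theorem monomialMatrix_mul_monomialMatrix (σ τ : Perm ι) (d e : ι → R) :
    monomialMatrix σ d * monomialMatrix τ e =
      monomialMatrix (σ * τ) fun j => d (τ j) * e j := by
  ext i j
  rw [mul_monomialMatrix_apply, monomialMatrix_apply, monomialMatrix_apply, ite_mul, zero_mul]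
  rfl

theorem monomialMatrix_pow (σ : Perm ι) (d : ι → R) (k : ℕ) :
    monomialMatrix σ d ^ k =
      monomialMatrix (σ ^ k) fun j => ∏ t ∈ range k, d ((σ ^ t) j) := by
  induction k with
  | zero => simp [monomialMatrix_one]
  | succ k ih =>
    rw [pow_succ, ih, monomialMatrix_mul_monomialMatrix, ← pow_succ]
    congr 1
    funext j
    rw [prod_range_succ' (fun t => d ((σ ^ t) j))]
    simp [pow_succ, Perm.mul_apply]

theorem det_monomialMatrix (σ : Perm ι) (d : ι → R) :
    (monomialMatrix σ d).det = Perm.sign σ * ∏ j, d j := by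
  have : monomialMatrix σ d = (diagonal d).submatrix (⇑σ⁻¹) id := by
    ext i j
    simp only [monomialMatrix_apply, submatrix_apply, diagonal_apply, id, Perm.inv_eq_iff_eq]
    split_ifs <;> simp_all
  rw [this, det_permute, det_diagonal, Perm.sign_inv]

theorem exists_perm_apply_ne_zero_of_det_ne_zero {A : Matrix ι ι R} (hA : A.det ≠ 0) :
    ∃ τ : Perm ι, ∀ j, A (τ j) j ≠ 0 := by
  rw [det_apply] at hA
  obtain ⟨τ, -, hτ⟩ := exists_ne_zero_of_sum_ne_zero hA
  exact ⟨τ, fun j hj => hτ (smul_eq_zero_of_right _ (prod_eq_zero (mem_univ j) hj))⟩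

theorem IsMonomialWithPerm.isDiag_mul_diagonal_mul {A B : Matrix ι ι R} {σ : Perm ι}
    (hA : A.IsMonomialWithPerm σ) (hB : B.IsMonomialWithPerm σ⁻¹) (δ : ι → R) :
    (A * diagonal δ * B).IsDiag := by
  intro i j hij
  rw [hB.eq_monomialMatrix, mul_monomialMatrix_apply, mul_diagonal,
    hA.apply_eq_zero (by simpa using hij), zero_mul, zero_mul]

theorem IsMonomialWithPerm.det_eq_sign_of_pow_eq_one {m : ℕ}
    {A : Matrix (Fin (m + 1)) (Fin (m + 1)) R} (hA : A.IsMonomialWithPerm (finRotate (m + 1)))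
    (hpow : A ^ (m + 1) = 1) : A.det = Perm.sign (finRotate (m + 1)) := by
  have hprod : ∏ j, A (finRotate (m + 1) j) j = 1 := by
    have h00 := congr_fun (congr_fun hpow 0) 0
    rw [hA.eq_monomialMatrix, monomialMatrix_pow, finRotate_pow_self, monomialMatrix_apply,
      Perm.one_apply, if_pos rfl, one_apply_eq] at h00
    rw [← h00, ← Fin.prod_univ_eq_prod_range]
    simp only [finRotate_pow_val_apply_zero]
  rw [hA.eq_monomialMatrix, det_monomialMatrix, hprod, mul_one]

variable [NoZeroDivisors R] {A B : Matrix ι ι R} {σ τ : Perm ι}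

theorem exists_isMonomialWithPerm_of_mul_diagonal_eq_diagonal_mul {d e : ι → R}
    (hA : A.det ≠ 0) (hd : Function.Injective d) (h : A * diagonal d = diagonal e * A) :
    ∃ σ, A.IsMonomialWithPerm σ := by
  obtain ⟨τ, hτ⟩ := exists_perm_apply_ne_zero_of_det_ne_zero hA
  have hrow : ∀ i j, A i j ≠ 0 → d j = e i := fun i j hij =>
    mul_left_cancel₀ hij <| by simpa [mul_comm] using congr_fun (congr_fun h i) j
  refine ⟨τ, fun i j => ⟨fun hij => ?_, by rintro rfl; exact hτ j⟩⟩
  have hτi : A i (τ⁻¹ i) ≠ 0 := by simpa using hτ (τ⁻¹ i)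
  rw [hd ((hrow i j hij).trans (hrow i _ hτi).symm)]
  simp

theorem IsMonomialWithPerm.mul (hA : A.IsMonomialWithPerm σ) (hB : B.IsMonomialWithPerm τ) :
    (A * B).IsMonomialWithPerm (σ * τ) := by
  intro i j
  rw [hB.eq_monomialMatrix, mul_monomialMatrix_apply, mul_ne_zero_iff_right (hB.apply_ne_zero j),
    hA, Perm.mul_apply]

theorem IsMonomialWithPerm.of_mul_eq_one [Nontrivial R] (hA : A.IsMonomialWithPerm σ)
    (hBA : B * A = 1) : B.IsMonomialWithPerm σ⁻¹ := by
  intro i k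
  have h := congr_fun (congr_fun hBA i) (σ⁻¹ k)
  rw [hA.eq_monomialMatrix, mul_monomialMatrix_apply] at h
  have hk := hA.apply_ne_zero (σ⁻¹ k)
  simp only [Perm.coe_inv, apply_symm_apply] at h hk
  rw [← mul_ne_zero_iff_right hk, h]
  by_cases hik : i = σ⁻¹ k <;> simp [one_apply, hik]

end Monomial

end Matrix

open Matrix

abbrev diagNormalizer (n : ℕ) : Subgroup (SpecialLinearGroup (Fin n) ℂ) :=
  Subgroup.normalizer (diagSubgroupSL n : Set (SpecialLinearGroup (Fin n) ℂ))

theorem exists_injective_prod_eq_one (K : Type*) [Field K] [IsAlgClosed K] [CharZero K] (n : ℕ) :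
    ∃ d : Fin n → K, Function.Injective d ∧ ∏ j, d j = 1 := by
  rcases n.eq_zero_or_pos with rfl | hn
  · exact ⟨fun _ => 1, fun i => i.elim0, by simp⟩
  set d₀ : Fin n → K := fun j => (j : ℕ) + 1
  have hd₀ : ∏ j, d₀ j ≠ 0 :=
    prod_ne_zero_iff.mpr fun j _ => Nat.cast_add_one_ne_zero (j : ℕ)
  obtain ⟨c, hc⟩ := IsAlgClosed.exists_pow_nat_eq (∏ j, d₀ j)⁻¹ hn
  have hc0 : c ≠ 0 := by
    rintro rfl
    exact inv_ne_zero hd₀ (by rw [← hc, zero_pow hn.ne'])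
  refine ⟨fun j => c * d₀ j, fun i j h => Fin.ext ?_, ?_⟩
  · simpa [d₀] using mul_left_cancel₀ hc0 h
  · rw [prod_mul_distrib, prod_const, card_univ, Fintype.card_fin, hc, inv_mul_cancel₀ hd₀]

variable {n : ℕ}

theorem mem_diagSubgroupSL_iff {g : SpecialLinearGroup (Fin n) ℂ} :
    g ∈ diagSubgroupSL n ↔ (g : Matrix (Fin n) (Fin n) ℂ).IsDiag :=
  Iff.rfl

theorem exists_isMonomialWithPerm_of_mem_diagNormalizer {g : SpecialLinearGroup (Fin n) ℂ}
    (hg : g ∈ diagNormalizer n) :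
    ∃ σ, (g : Matrix (Fin n) (Fin n) ℂ).IsMonomialWithPerm σ := by
  obtain ⟨d, hd, hprod⟩ := exists_injective_prod_eq_one ℂ n
  let D : SpecialLinearGroup (Fin n) ℂ := ⟨diagonal d, by rw [det_diagonal, hprod]⟩
  have hconj : g * D * g⁻¹ ∈ diagSubgroupSL n :=
    (Subgroup.mem_normalizer_iff.mp hg D).mp (isDiag_diagonal d)
  refine exists_isMonomialWithPerm_of_mul_diagonal_eq_diagonal_mul (by simp) hd
    (e := ((g * D * g⁻¹ : SpecialLinearGroup (Fin n) ℂ) : Matrix (Fin n) (Fin n) ℂ).diag) ?_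
  rw [(mem_diagSubgroupSL_iff.mp hconj).diagonal_diag, ← Matrix.SpecialLinearGroup.coe_mul,
    inv_mul_cancel_right]
  rfl

theorem mem_diagNormalizer_of_isMonomialWithPerm {g : SpecialLinearGroup (Fin n) ℂ}
    {σ : Perm (Fin n)} (hg : (g : Matrix (Fin n) (Fin n) ℂ).IsMonomialWithPerm σ) :
    g ∈ diagNormalizer n := by
  have hg' : ((g⁻¹ : SpecialLinearGroup (Fin n) ℂ) :
      Matrix (Fin n) (Fin n) ℂ).IsMonomialWithPerm σ⁻¹ :=
    hg.of_mul_eq_one <| by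
      rw [← Matrix.SpecialLinearGroup.coe_mul, inv_mul_cancel, Matrix.SpecialLinearGroup.coe_one]
  refine Subgroup.mem_normalizer_iff.mpr fun h => ⟨fun hh => ?_, fun hh => ?_⟩
  · rw [mem_diagSubgroupSL_iff, Matrix.SpecialLinearGroup.coe_mul,
      Matrix.SpecialLinearGroup.coe_mul, ← (mem_diagSubgroupSL_iff.mp hh).diagonal_diag]
    exact hg.isDiag_mul_diagonal_mul hg' _
  · rw [show h = g⁻¹ * (g * h * g⁻¹) * g by group, mem_diagSubgroupSL_iff,
      Matrix.SpecialLinearGroup.coe_mul, Matrix.SpecialLinearGroup.coe_mul,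
      ← (mem_diagSubgroupSL_iff.mp hh).diagonal_diag]
    exact hg'.isDiag_mul_diagonal_mul (by rwa [inv_inv]) _

noncomputable def diagNormalizerToPerm (n : ℕ) : diagNormalizer n →* Perm (Fin n) :=
  MonoidHom.mk' (fun g => (exists_isMonomialWithPerm_of_mem_diagNormalizer g.2).choose)
    fun g h => (exists_isMonomialWithPerm_of_mem_diagNormalizer (g * h).2).choose_spec.perm_eq
      ((exists_isMonomialWithPerm_of_mem_diagNormalizer g.2).choose_spec.mul
        (exists_isMonomialWithPerm_of_mem_diagNormalizer h.2).choose_spec)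

theorem isMonomialWithPerm_diagNormalizerToPerm (g : diagNormalizer n) :
    ((g : SpecialLinearGroup (Fin n) ℂ) : Matrix (Fin n) (Fin n) ℂ).IsMonomialWithPerm
      (diagNormalizerToPerm n g) :=
  (exists_isMonomialWithPerm_of_mem_diagNormalizer g.2).choose_spec

theorem diagNormalizerToPerm_eq {g : diagNormalizer n} {σ : Perm (Fin n)}
    (hg : ((g : SpecialLinearGroup (Fin n) ℂ) :
      Matrix (Fin n) (Fin n) ℂ).IsMonomialWithPerm σ) :
    diagNormalizerToPerm n g = σ :=
  (isMonomialWithPerm_diagNormalizerToPerm g).perm_eq hg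

theorem ker_diagNormalizerToPerm :
    (diagNormalizerToPerm n).ker = (diagSubgroupSL n).subgroupOf (diagNormalizer n) := by
  ext g
  rw [MonoidHom.mem_ker, Subgroup.mem_subgroupOf, mem_diagSubgroupSL_iff,
    (isMonomialWithPerm_diagNormalizerToPerm g).isDiag_iff]

theorem isMonomialWithPerm_monomialMatrix_const {σ : Perm (Fin n)} {c : ℂ}
    (hc : (Perm.sign σ : ℂ) * c ^ n = 1) :
    (monomialMatrix σ fun _ => c).IsMonomialWithPerm σ :=
  isMonomialWithPerm_monomialMatrix fun j hc0 => by simp [hc0, zero_pow j.pos.ne'] at hc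

def monomialDiagNormalizer (σ : Perm (Fin n)) (c : ℂ) (hc : (Perm.sign σ : ℂ) * c ^ n = 1) :
    diagNormalizer n :=
  ⟨⟨monomialMatrix σ fun _ => c, by
      rwa [det_monomialMatrix, prod_const, card_univ, Fintype.card_fin]⟩,
    mem_diagNormalizer_of_isMonomialWithPerm (isMonomialWithPerm_monomialMatrix_const hc)⟩

theorem diagNormalizerToPerm_monomialDiagNormalizer (σ : Perm (Fin n)) (c : ℂ)
    (hc : (Perm.sign σ : ℂ) * c ^ n = 1) :
    diagNormalizerToPerm n (monomialDiagNormalizer σ c hc) = σ :=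
  diagNormalizerToPerm_eq (isMonomialWithPerm_monomialMatrix_const hc)

theorem diagNormalizerToPerm_surjective (hn : 0 < n) :
    Function.Surjective (diagNormalizerToPerm n) := fun σ => by
  obtain ⟨c, hc⟩ := IsAlgClosed.exists_pow_nat_eq ((Perm.sign σ : ℤ) : ℂ) hn
  exact ⟨_, diagNormalizerToPerm_monomialDiagNormalizer σ c
    (by rw [hc, Int.cast_units_mul_self])⟩

noncomputable def signSection (hn : Odd n) : Perm (Fin n) →* diagNormalizer n where
  toFun σ :=
    monomialDiagNormalizer σ (Perm.sign σ : ℤ) (Int.cast_units_mul_pow_of_odd _ hn)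
  map_one' := Subtype.ext <| Subtype.ext <| by
    simpa [monomialDiagNormalizer] using monomialMatrix_one
  map_mul' σ τ := Subtype.ext <| Subtype.ext <| by
    change monomialMatrix _ _ = monomialMatrix _ _ * monomialMatrix _ _
    rw [monomialMatrix_mul_monomialMatrix, map_mul, Units.val_mul, Int.cast_mul]

theorem diagNormalizerToPerm_signSection (hn : Odd n) (σ : Perm (Fin n)) :
    diagNormalizerToPerm n (signSection hn σ) = σ :=
  diagNormalizerToPerm_monomialDiagNormalizer _ _ (Int.cast_units_mul_pow_of_odd _ hn)

theorem odd_of_diagNormalizerToPerm_comp_eq_id (hn : 0 < n) {s : Perm (Fin n) →* diagNormalizer n}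
    (hs : ∀ σ, diagNormalizerToPerm n (s σ) = σ) : Odd n := by
  obtain ⟨m, rfl⟩ := Nat.exists_eq_add_one_of_ne_zero hn.ne'
  by_contra heven
  have hm : Odd m := by simpa [Nat.odd_add_one] using heven
  have hA := hs (finRotate (m + 1)) ▸
    isMonomialWithPerm_diagNormalizerToPerm (s (finRotate (m + 1)))
  have hpow : ((s (finRotate (m + 1)) : SpecialLinearGroup (Fin (m + 1)) ℂ) :
      Matrix (Fin (m + 1)) (Fin (m + 1)) ℂ) ^ (m + 1) = 1 := by
    rw [← Matrix.SpecialLinearGroup.coe_pow, ← Subgroup.coe_pow, ← map_pow,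
      finRotate_pow_self, map_one]
    rfl
  have hdet := hA.det_eq_sign_of_pow_eq_one hpow
  rw [(s (finRotate (m + 1))).1.2, sign_finRotate, add_tsub_cancel_right, hm.neg_one_pow] at hdet
  norm_num at hdet

/-- Every element of the normalizer `N` of the diagonal subgroup
`T ⊂ SL(n, ℂ)` is monomial; the underlying-permutation map `π : N → S_n` is a
surjective homomorphism with kernel `T`; and `π` splits iff `n` is odd. -/
theorem statement7 (n : ℕ) (hn : 2 ≤ n) :
    (∀ g ∈ (Subgroup.normalizer (diagSubgroupSL n : Set (Matrix.SpecialLinearGroup (Fin n) ℂ))), IsMonomialSL n g) ∧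
    (∃ π : ↥(Subgroup.normalizer (diagSubgroupSL n : Set (Matrix.SpecialLinearGroup (Fin n) ℂ))) →* Equiv.Perm (Fin n),
      (∀ (g : ↥(Subgroup.normalizer (diagSubgroupSL n : Set (Matrix.SpecialLinearGroup (Fin n) ℂ)))) (i j : Fin n),
        ((g : Matrix.SpecialLinearGroup (Fin n) ℂ) : Matrix (Fin n) (Fin n) ℂ) i j ≠ 0
          ↔ i = π g j) ∧
      Function.Surjective π ∧
      π.ker = (diagSubgroupSL n).subgroupOf (Subgroup.normalizer (diagSubgroupSL n : Set (Matrix.SpecialLinearGroup (Fin n) ℂ))) ∧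
      ((∃ s : Equiv.Perm (Fin n) →* ↥(Subgroup.normalizer (diagSubgroupSL n : Set (Matrix.SpecialLinearGroup (Fin n) ℂ))),
          ∀ σ, π (s σ) = σ) ↔ Odd n)) := by
  have hpos : 0 < n := by omega
  refine ⟨fun g hg => ?_, diagNormalizerToPerm n, isMonomialWithPerm_diagNormalizerToPerm,
    diagNormalizerToPerm_surjective hpos, ker_diagNormalizerToPerm,
    fun ⟨_, hs⟩ => odd_of_diagNormalizerToPerm_comp_eq_id hpos hs,
    fun hodd => ⟨signSection hodd, diagNormalizerToPerm_signSection hodd⟩⟩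
  have hg := isMonomialWithPerm_diagNormalizerToPerm ⟨g, hg⟩
  exact ⟨hg.existsUnique_row, hg.existsUnique_col⟩
end
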